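/- The graph R_ω satisfies the extension property of the countable random graph: for all finite disjoint sets A, B of vertices of R_ω, there exists a vertex x ∉ A ∪ B such that x is adjacent in R_ω to every element of A and to no element of B. -/

import Mathlib

/-!
Take `x = 2 ^ k * ∏ a ∈ A, p_a` with `k` so large that `x` exceeds every vertex in `A ∪ B`.
Then `p_a ∣ x` for `a ∈ A`. For `b ∈ B`, the prime `p_x ≥ x + 2` is too large to divide `b`,
and `p_b ∣ x` would force `p_b = 2 = p_0` (impossible, as `b ≥ 2`) or `p_b = p_a` for some
`a ∈ A`, i.e. `b = a`, contradicting disjointness.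
-/

/-- The adjacency relation of the graph `R_ω`: its vertices are the naturals `≥ 2`, and
distinct vertices `m, n` are adjacent iff `p_m ∣ n` or `p_n ∣ m`, where `(p_k)` is the
increasing enumeration of the primes. -/
def RomegaAdj (m n : ℕ) : Prop :=
  m ≠ n ∧ 2 ≤ m ∧ 2 ≤ n ∧ (Nat.nth Nat.Prime m ∣ n ∨ Nat.nth Nat.Prime n ∣ m)

namespace Nat

theorem nth_prime_dvd_nth_prime_iff {a b : ℕ} : nth Prime b ∣ nth Prime a ↔ b = a := by
  rw [prime_dvd_prime_iff_eq (prime_nth_prime b) (prime_nth_prime a)]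
  exact (nth_injective infinite_setOfPred_prime).eq_iff

theorem nth_prime_dvd_prod_nth_prime_iff {b : ℕ} (A : Finset ℕ) :
    nth Prime b ∣ ∏ a ∈ A, nth Prime a ↔ b ∈ A := by
  constructor
  · intro h
    obtain ⟨a, ha, hba⟩ := (prime_nth_prime b).prime.exists_mem_finset_dvd h
    exact nth_prime_dvd_nth_prime_iff.1 hba ▸ ha
  · exact fun hb => Finset.dvd_prod_of_mem _ hb

theorem mem_of_nth_prime_dvd_two_pow_mul_prod {b k : ℕ} {A : Finset ℕ} (hb : b ≠ 0)
    (h : nth Prime b ∣ 2 ^ k * ∏ a ∈ A, nth Prime a) : b ∈ A := by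
  rcases (prime_nth_prime b).dvd_mul.1 h with h2 | hA
  · rw [← nth_prime_zero_eq_two] at h2
    exact absurd (nth_prime_dvd_nth_prime_iff.1 ((prime_nth_prime b).dvd_of_dvd_pow h2)) hb
  · exact (nth_prime_dvd_prod_nth_prime_iff A).1 hA

theorem not_nth_prime_dvd_of_lt {b n : ℕ} (hb : 0 < b) (hbn : b < n) : ¬ nth Prime n ∣ b :=
  fun h => by linarith [le_of_dvd hb h, add_two_le_nth_prime n]

theorem lt_two_pow_mul_prod_nth_prime (A : Finset ℕ) (N : ℕ) :
    N < 2 ^ N * ∏ a ∈ A, nth Prime a :=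
  N.lt_two_pow_self.trans_le <|
    Nat.le_mul_of_pos_right _ (Finset.prod_pos fun a _ => (prime_nth_prime a).pos)

end Nat

theorem Romega_extension_property_general (A B : Finset ℕ)
    (hA : ∀ a ∈ A, 2 ≤ a) (hAB : Disjoint A B) :
    ∃ x : ℕ, 2 ≤ x ∧ x ∉ A ∧ x ∉ B ∧
      (∀ a ∈ A, RomegaAdj x a) ∧ ∀ b ∈ B, ¬ RomegaAdj x b := by
  set N := (A ∪ B).sup id + 1
  set x := 2 ^ N * ∏ a ∈ A, Nat.nth Nat.Prime a
  have hNx : N < x := Nat.lt_two_pow_mul_prod_nth_prime A N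
  have hlt : ∀ y ∈ A ∪ B, y < x := fun y hy =>
    (Nat.lt_succ_of_le (Finset.le_sup (f := id) hy)).trans hNx
  have hA_lt : ∀ a ∈ A, a < x := fun a ha => hlt a (Finset.mem_union_left _ ha)
  have hB_lt : ∀ b ∈ B, b < x := fun b hb => hlt b (Finset.mem_union_right _ hb)
  refine ⟨x, by omega, fun h => (hA_lt x h).false, fun h => (hB_lt x h).false, ?_, ?_⟩
  · intro a ha
    exact ⟨(hA_lt a ha).ne', by omega, hA a ha,
      Or.inr (dvd_mul_of_dvd_right (Finset.dvd_prod_of_mem _ ha) _)⟩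
  · rintro b hb ⟨-, -, hb2, hxb | hbx⟩
    · exact Nat.not_nth_prime_dvd_of_lt (by omega) (hB_lt b hb) hxb
    · exact Finset.disjoint_left.1 hAB
        (Nat.mem_of_nth_prime_dvd_two_pow_mul_prod (by omega) hbx) hb

/-- **`R_ω` is a random graph.** For all finite disjoint sets `A, B` of vertices of `R_ω`
there is a vertex `x ∉ A ∪ B` adjacent to every element of `A` and to no element of
`B`. -/
theorem Romega_extension_property (A B : Finset ℕ)
    (hA : ∀ a ∈ A, 2 ≤ a) (hB : ∀ b ∈ B, 2 ≤ b) (hAB : Disjoint A B) :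
    ∃ x : ℕ, 2 ≤ x ∧ x ∉ A ∧ x ∉ B ∧
      (∀ a ∈ A, RomegaAdj x a) ∧ ∀ b ∈ B, ¬ RomegaAdj x b :=
  Romega_extension_property_general A B hA hAB
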